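/- Let c : {0,1}^n → {0,1}, let G : {0,1}^m → {0,1}^{n+1} be any map, and let D be the pushforward of the uniform distribution on {0,1}^m under G. If d_TV(D, D_c) < 1/2, then m ≥ n. -/

import Mathlib

/-- The graph distribution `D_c` on `{0,1}^{n+1}` of a Boolean function
`c : {0,1}^n → {0,1}`: it assigns probability `2^{-n}` to each string `x‖c(x)`
and `0` otherwise. -/
noncomputable def boolGraphDist (n : ℕ) (c : (Fin n → Bool) → Bool) :
    (Fin (n + 1) → Bool) → ℝ :=
  fun y => if ∃ x : Fin n → Bool, y = Fin.snoc x (c x) then (1 : ℝ) / 2 ^ n else 0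

/-- The pushforward of the uniform distribution on `{0,1}^m` under
`G : {0,1}^m → {0,1}^{n+1}`. -/
noncomputable def pushUnif (n m : ℕ) (G : (Fin m → Bool) → (Fin (n + 1) → Bool)) :
    (Fin (n + 1) → Bool) → ℝ :=
  fun y => ((Finset.univ.filter fun x : Fin m → Bool => G x = y).card : ℝ) / 2 ^ m

/-- Total variation distance between distributions on a finite type. -/
noncomputable def tvDist {α : Type*} [Fintype α] (P Q : α → ℝ) : ℝ :=
  (1 / 2) * ∑ y, |P y - Q y|

/-! The support of the pushforward of the uniform distribution on `{0,1}^m` has at most `2^m`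
points, while `D_c` spreads mass `2^{-n}` over `2^n` points. If `m < n`, then `D_c` puts mass at
least `1 - 2^m / 2^n ≥ 1/2` outside that support, and the total variation distance is at least the
excess mass of one distribution over the other on any set. -/

open Finset

section TotalVariation

variable {α : Type*} [Fintype α]

theorem sum_sub_le_tvDist {P Q : α → ℝ} (hPQ : ∑ y, P y = ∑ y, Q y) (A : Finset α) :
    ∑ y ∈ A, (Q y - P y) ≤ tvDist P Q := by
  classical
  -- Equal total masses make the excess of `Q` on `A` equal to the excess of `P` on `Aᶜ`.
  have hcompl : ∑ y ∈ Aᶜ, (P y - Q y) = ∑ y ∈ A, (Q y - P y) := by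
    rw [sum_sub_distrib, sum_sub_distrib]
    linarith [sum_compl_add_sum A P, sum_compl_add_sum A Q]
  have hAc : ∑ y ∈ Aᶜ, (P y - Q y) ≤ ∑ y ∈ Aᶜ, |P y - Q y| :=
    sum_le_sum fun y _ => le_abs_self _
  have hA : ∑ y ∈ A, (Q y - P y) ≤ ∑ y ∈ A, |P y - Q y| :=
    sum_le_sum fun y _ => abs_sub_comm (P y) (Q y) ▸ le_abs_self _
  rw [tvDist, ← sum_compl_add_sum A]
  linarith

theorem one_sub_card_mul_le_sum_compl [DecidableEq α] {Q : α → ℝ} {b : ℝ}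
    (hQ : ∑ y, Q y = 1) (hb : ∀ y, Q y ≤ b) (S : Finset α) :
    1 - #S * b ≤ ∑ y ∈ Sᶜ, Q y := by
  have hS : ∑ y ∈ S, Q y ≤ #S * b := by
    simpa only [nsmul_eq_mul] using sum_le_card_nsmul S Q b fun y _ => hb y
  linarith [sum_compl_add_sum S Q]

end TotalVariation

theorem boolGraphDist_le (n : ℕ) (c : (Fin n → Bool) → Bool) (y : Fin (n + 1) → Bool) :
    boolGraphDist n c y ≤ 1 / 2 ^ n := by
  unfold boolGraphDist
  split_ifs
  exacts [le_rfl, by positivity]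

theorem sum_boolGraphDist (n : ℕ) (c : (Fin n → Bool) → Bool) :
    ∑ y, boolGraphDist n c y = 1 := by
  have hinj : Function.Injective fun x : Fin n → Bool => (Fin.snoc x (c x) : Fin (n + 1) → Bool) :=
    fun a b hab => funext fun i => by simpa using congrFun hab i.castSucc
  rw [← Fintype.sum_of_injective _ hinj (fun _ => (1 : ℝ) / 2 ^ n)]
  · simp
  · rintro y hy
    simp only [Set.mem_range, not_exists] at hy
    exact if_neg fun ⟨x, hx⟩ => hy x hx.symm
  · intro x
    simp [boolGraphDist]

theorem sum_pushUnif (n m : ℕ) (G : (Fin m → Bool) → (Fin (n + 1) → Bool)) :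
    ∑ y, pushUnif n m G y = 1 := by
  classical
  have hfib := card_eq_sum_card_fiberwise (f := G) (s := univ) (t := univ) fun x _ => mem_univ _
  simp only [pushUnif, ← sum_div, ← Nat.cast_sum, ← hfib, card_univ, Fintype.card_fun,
    Fintype.card_bool, Fintype.card_fin, Nat.cast_pow, Nat.cast_ofNat]
  exact div_self (by positivity)

theorem pushUnif_eq_zero_of_notMem_image (n m : ℕ) (G : (Fin m → Bool) → (Fin (n + 1) → Bool))
    {y : Fin (n + 1) → Bool} (hy : y ∉ univ.image G) : pushUnif n m G y = 0 := by
  simp only [mem_image, mem_univ, true_and, not_exists] at hy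
  simp [pushUnif, hy]

theorem le_of_tvDist_lt_half (n m : ℕ) (c : (Fin n → Bool) → Bool)
    (G : (Fin m → Bool) → (Fin (n + 1) → Bool))
    (h : tvDist (pushUnif n m G) (boolGraphDist n c) < 1 / 2) :
    n ≤ m := by
  classical
  by_contra! hmn
  set S := univ.image G
  have hcard : (#S : ℝ) * (1 / 2 ^ n) ≤ 1 / 2 := by
    have hS : (#S : ℝ) ≤ 2 ^ m := by exact_mod_cast card_image_le.trans_eq (by simp)
    have hpow : (2 : ℝ) ^ m * 2 ≤ 2 ^ n := by
      rw [← pow_succ]; exact pow_le_pow_right₀ (by norm_num) hmn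
    rw [mul_one_div, div_le_iff₀ (by positivity)]
    linarith
  have hmass : 1 - #S * (1 / 2 ^ n) ≤ tvDist (pushUnif n m G) (boolGraphDist n c) :=
    calc 1 - #S * (1 / 2 ^ n)
        ≤ ∑ y ∈ Sᶜ, boolGraphDist n c y :=
          one_sub_card_mul_le_sum_compl (sum_boolGraphDist n c) (boolGraphDist_le n c) S
      _ = ∑ y ∈ Sᶜ, (boolGraphDist n c y - pushUnif n m G y) :=
          sum_congr rfl fun y hy => by
            rw [pushUnif_eq_zero_of_notMem_image n m G (mem_compl.mp hy), sub_zero]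
      _ ≤ _ := sum_sub_le_tvDist (by rw [sum_pushUnif, sum_boolGraphDist]) Sᶜ
  linarith
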